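/- arXiv:1103.3892 — 2 statements merged into one kernel-verified Lean document; each statement's English description precedes it below -/
import Mathlib

section
/- Let p be a prime with p ≡ 3 (mod 4) and let x, y be elements of 𝔽_p^× satisfying x^12 = y^6. Then x^6 = y^(3 + (p−1)/2). -/
theorem stmt_4 (p : ℕ) [Fact p.Prime] (hp : p % 4 = 3) (x y : (ZMod p)ˣ)
    (h : x ^ 12 = y ^ 6) : x ^ 6 = y ^ (3 + (p - 1) / 2) := by
  have hmodd : ∃ k, (p - 1) / 2 = 2 * k + 1 := ⟨(p - 3) / 4, by omega⟩
  have hA : (p - 1) / 2 + (p - 1) = 3 * ((p - 1) / 2) := by omega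
  have hB : 6 * ((p - 1) / 2) = (p - 1) * 3 := by omega
  have hx : x ^ (p - 1) = 1 := ZMod.units_pow_card_sub_one_eq_one p x
  have hy : y ^ (p - 1) = 1 := ZMod.units_pow_card_sub_one_eq_one p y
  set ε := x ^ 6 * (y ^ 3)⁻¹ with hε
  have hε2 : ε ^ 2 = 1 := by
    rw [hε, mul_pow, ← pow_mul, ← inv_pow, ← pow_mul]
    norm_num [inv_pow, h]
  have hεε : ε * ε = 1 := by rw [← sq]; exact hε2
  have hεinv : ε⁻¹ = ε := inv_eq_of_mul_eq_one_right hεε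
  have hεpow : ε ^ ((p - 1) / 2) = ε := by
    obtain ⟨k, hk⟩ := hmodd
    rw [hk, pow_succ, pow_mul, hε2, one_pow, one_mul]
  have hy3 : y ^ 3 = ε⁻¹ * x ^ 6 := by
    rw [hε, mul_inv, inv_inv, mul_comm _ (y ^ 3), mul_assoc, inv_mul_cancel, mul_one]
  have hym : y ^ ((p - 1) / 2) = ε := by
    calc y ^ ((p - 1) / 2) = y ^ ((p - 1) / 2) * y ^ (p - 1) := by rw [hy, mul_one]
    _ = y ^ ((p - 1) / 2 + (p - 1)) := (pow_add y _ _).symm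
    _ = (y ^ 3) ^ ((p - 1) / 2) := by rw [hA, pow_mul]
    _ = (ε⁻¹) ^ ((p - 1) / 2) * (x ^ 6) ^ ((p - 1) / 2) := by rw [hy3, mul_pow]
    _ = ε * x ^ (6 * ((p - 1) / 2)) := by rw [hεinv, hεpow, ← pow_mul]
    _ = ε * (x ^ (p - 1)) ^ 3 := by rw [hB, pow_mul]
    _ = ε := by rw [hx, one_pow, mul_one]
  rw [pow_add, hym, hy3, hεinv, mul_comm ε (x ^ 6), mul_assoc, hεε, mul_one]
end

section
/- Let p ≥ 5 be a prime with p ≡ 3 (mod 4). Then the sum over all x ∈ 𝔽_p of the Legendre symbol of x^3 + x is zero: ∑_{x ∈ 𝔽_p} legendreSym p (x^3 + x) = 0. (Equivalently, the elliptic curve y² = x³ + x over 𝔽_p is supersingular when p ≡ 3 mod 4.) -/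
theorem stmt_6 (p : ℕ) [Fact p.Prime] (hp5 : 5 ≤ p) (hp : p % 4 = 3) :
    ∑ x : ZMod p, legendreSym p ((x.val : ℤ) ^ 3 + (x.val : ℤ)) = 0 := by
  have hodd : p ≠ 2 := by omega
  have hchar : ringChar (ZMod p) ≠ 2 := by
    rw [ZMod.ringChar_zmod_n]; exact hodd
  have hχ : ∀ x : ZMod p, legendreSym p ((x.val : ℤ) ^ 3 + (x.val : ℤ))
      = quadraticChar (ZMod p) (x ^ 3 + x) := by
    intro x
    rw [legendreSym]
    congr 1
    push_cast [ZMod.natCast_val, ZMod.cast_id]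
    ring
  simp_rw [hχ]
  have hneg1 : quadraticChar (ZMod p) (-1) = -1 := by
    rw [quadraticChar_neg_one hchar, ZMod.card, ZMod.χ₄_nat_eq_if_mod_four]
    simp [hp]; omega
  have key : ∑ x : ZMod p, quadraticChar (ZMod p) (x ^ 3 + x)
      = -∑ x : ZMod p, quadraticChar (ZMod p) (x ^ 3 + x) := by
    rw [← Finset.sum_neg_distrib]
    apply Fintype.sum_equiv (Equiv.neg (ZMod p))
    intro x
    have : ((Equiv.neg (ZMod p)) x) ^ 3 + (Equiv.neg (ZMod p)) x
        = (-1) * (x ^ 3 + x) := by simp [Equiv.neg_apply]; ring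
    rw [this, map_mul, hneg1, neg_one_mul, neg_neg]
  omega
end
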